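/- Let m, r ≥ 1, let a = (a_1, …, a_{2m}) be a sequence of nonzero integers, let ε_1, …, ε_{2r+1} ∈ {1, −1}, and let c_1, …, c_{2r} be arbitrary integers. Let ã be the concatenated sequence (ε_1 a, c_1, ε_2 a^{rev}, c_2, ε_3 a, c_3, …, ε_{2r} a^{rev}, c_{2r}, ε_{2r+1} a), where ε a denotes the sequence (ε a_1, …, ε a_{2m}) and a^{rev} = (a_{2m}, …, a_1). Then the number of sign changes satisfies t(ã) ≤ (2r+1)·t(a) + 2·#{j : c_j ≠ 0}. -/

import Mathlib

/-!
Sign changes are counted pair by pair, so splitting `L ++ x :: M` at `x` costs nothing when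
`x = 0` and at most one change on each side of `x` otherwise. Since each block `±a` or `±aʳᵉᵛ`
of `ã` has exactly `t(a)` sign changes (sign changes are invariant under reversal and under
multiplication by a nonzero scalar), cutting `ã` at the `2r` inserted entries `c_j` gives the bound.
-/

/-- The number of sign changes of a finite sequence of integers:
the number of indices `i` with `x_i * x_{i+1} < 0` for consecutive entries. -/
def signChanges (L : List ℤ) : ℕ :=
  ((Finset.range (L.length - 1)).filter (fun i => L.getD i 0 * L.getD (i + 1) 0 < 0)).card

/-- The Ohtsuki–Riley–Sakuma-type concatenated sequence
`(ε₁ a, c₁, ε₂ a⁻¹, c₂, ε₃ a, c₃, …, ε₂ᵣ a⁻¹, c₂ᵣ, ε₂ᵣ₊₁ a)`,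
indexed from `0`: block `j` (for `0 ≤ j ≤ 2r`) is `ε (j) • a` if `j` is even and
`ε (j) • a.reverse` if `j` is odd, and the single entry `c j` is inserted after
block `j` for `j < 2r`. -/
def tildeSeq (r : ℕ) (a : List ℤ) (ε : ℕ → ℤ) (c : ℕ → ℤ) : List ℤ :=
  ((List.range (2 * r)).flatMap (fun j =>
    ((if j % 2 = 0 then a else a.reverse).map (fun x => ε j * x)) ++ [c j]))
    ++ (a.map (fun x => ε (2 * r) * x))

open Finset

theorem signChanges_singleton (x : ℤ) : signChanges [x] = 0 := rfl

theorem signChanges_cons_cons (x y : ℤ) (l : List ℤ) :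
    signChanges (x :: y :: l) = (if x * y < 0 then 1 else 0) + signChanges (y :: l) := by
  simp only [signChanges, List.length_cons, Nat.add_sub_cancel, card_filter,
    sum_range_succ', List.getD_cons_succ, List.getD_cons_zero]
  omega

theorem signChanges_append_cons (L M : List ℤ) (x : ℤ) :
    signChanges (L ++ x :: M) = signChanges (L ++ [x]) + signChanges (x :: M) := by
  induction L with
  | nil => simp [signChanges_singleton]
  | cons a L ih =>
    cases L with
    | nil => simp [signChanges_cons_cons, signChanges_singleton]
    | cons b l =>
      simp only [List.cons_append] at ih ⊢
      rw [signChanges_cons_cons, signChanges_cons_cons, ih]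
      omega

theorem signChanges_reverse (L : List ℤ) : signChanges L.reverse = signChanges L := by
  induction L with
  | nil => rfl
  | cons a L ih =>
    cases L with
    | nil => rfl
    | cons b l =>
      rw [List.reverse_cons, List.reverse_cons, List.append_assoc, List.singleton_append,
        signChanges_append_cons, ← List.reverse_cons, ih, signChanges_cons_cons b a,
        signChanges_singleton, signChanges_cons_cons a b, mul_comm]
      omega

theorem signChanges_map_mul {e : ℤ} (he : e ≠ 0) (L : List ℤ) :
    signChanges (L.map (e * ·)) = signChanges L := by
  induction L with
  | nil => rfl
  | cons a L ih =>
    cases L with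
    | nil => rfl
    | cons b l =>
      have hsign : e * a * (e * b) < 0 ↔ a * b < 0 := by
        rw [show e * a * (e * b) = (e * e) • (a * b) by ring,
          smul_neg_iff_of_pos_left (mul_self_pos.2 he)]
      rw [List.map_cons, List.map_cons, signChanges_cons_cons, ← List.map_cons, ih,
        signChanges_cons_cons]
      simp only [hsign]

theorem signChanges_cons_le (x : ℤ) (M : List ℤ) : signChanges (x :: M) ≤ signChanges M + 1 := by
  cases M with
  | nil => simp [signChanges_singleton]
  | cons y l =>
    rw [signChanges_cons_cons]
    split_ifs <;> omega

theorem signChanges_zero_cons (M : List ℤ) : signChanges (0 :: M) = signChanges M := by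
  cases M with
  | nil => rfl
  | cons y l => simp [signChanges_cons_cons]

theorem signChanges_append_singleton_le (L : List ℤ) (x : ℤ) :
    signChanges (L ++ [x]) ≤ signChanges L + 1 := by
  rw [← signChanges_reverse, List.reverse_append, List.reverse_singleton, List.singleton_append,
    ← signChanges_reverse L]
  exact signChanges_cons_le x L.reverse

theorem signChanges_append_zero (L : List ℤ) : signChanges (L ++ [0]) = signChanges L := by
  rw [← signChanges_reverse, List.reverse_append, List.reverse_singleton, List.singleton_append,
    signChanges_zero_cons, signChanges_reverse]

theorem signChanges_append_cons_le (L M : List ℤ) (x : ℤ) :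
    signChanges (L ++ x :: M) ≤ signChanges L + signChanges M + if x = 0 then 0 else 2 := by
  rw [signChanges_append_cons]
  split_ifs with hx
  · rw [hx, signChanges_append_zero, signChanges_zero_cons]
    omega
  · linarith [signChanges_append_singleton_le L x, signChanges_cons_le x M]

theorem signChanges_flatMap_append_le (g : ℕ → List ℤ) (c : ℕ → ℤ) (n : ℕ) :
    signChanges ((List.range n).flatMap (fun j => g j ++ [c j]) ++ g n) ≤
      ∑ j ∈ range (n + 1), signChanges (g j) + 2 * #{j ∈ range n | c j ≠ 0} := by
  induction n with
  | zero => simp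
  | succ n ih =>
    have hsplit : (List.range (n + 1)).flatMap (fun j => g j ++ [c j]) ++ g (n + 1) =
        ((List.range n).flatMap (fun j => g j ++ [c j]) ++ g n) ++ c n :: g (n + 1) := by
      simp [List.range_succ, List.flatMap_append]
    have hcard : #{j ∈ range (n + 1) | c j ≠ 0} =
        #{j ∈ range n | c j ≠ 0} + if c n = 0 then 0 else 1 := by
      simp only [card_filter, sum_range_succ, ite_not]
    rw [hsplit, sum_range_succ _ (n + 1), hcard]
    refine (signChanges_append_cons_le _ _ _).trans ?_
    split_ifs <;> omega

theorem signChanges_tildeSeq_le_general (r : ℕ) (a : List ℤ)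
    (ε : ℕ → ℤ) (hε : ∀ j ≤ 2 * r, ε j = 1 ∨ ε j = -1) (c : ℕ → ℤ) :
    signChanges (tildeSeq r a ε c) ≤
      (2 * r + 1) * signChanges a +
        2 * ((Finset.range (2 * r)).filter (fun j => c j ≠ 0)).card := by
  set g : ℕ → List ℤ := fun j => (if j % 2 = 0 then a else a.reverse).map (ε j * ·)
  have hblock : ∀ j ≤ 2 * r, signChanges (g j) = signChanges a := by
    intro j hj
    have hεj : ε j ≠ 0 := by rcases hε j hj with h | h <;> simp [h]
    simp only [g, signChanges_map_mul hεj]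
    split_ifs
    · rfl
    · exact signChanges_reverse a
  have hlast : g (2 * r) = a.map (ε (2 * r) * ·) := by simp [g]
  calc signChanges (tildeSeq r a ε c)
      = signChanges ((List.range (2 * r)).flatMap (fun j => g j ++ [c j]) ++ g (2 * r)) := by
        rw [hlast]; rfl
    _ ≤ ∑ j ∈ range (2 * r + 1), signChanges (g j) + 2 * #{j ∈ range (2 * r) | c j ≠ 0} :=
        signChanges_flatMap_append_le g c (2 * r)
    _ = (2 * r + 1) * signChanges a + 2 * #{j ∈ range (2 * r) | c j ≠ 0} := by
        rw [sum_congr rfl fun j hj => hblock j (Nat.lt_succ_iff.1 (mem_range.1 hj))]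
        simp

/-- The number of sign changes of the ORS concatenated sequence `ã` is at most
`(2r+1) t(a) + 2 #{j : c_j ≠ 0}`. -/
theorem signChanges_tildeSeq_le (m r : ℕ) (hm : 1 ≤ m) (hr : 1 ≤ r)
    (a : List ℤ) (ha_len : a.length = 2 * m) (ha : ∀ x ∈ a, x ≠ 0)
    (ε : ℕ → ℤ) (hε : ∀ j ≤ 2 * r, ε j = 1 ∨ ε j = -1) (c : ℕ → ℤ) :
    signChanges (tildeSeq r a ε c) ≤
      (2 * r + 1) * signChanges a +
        2 * ((Finset.range (2 * r)).filter (fun j => c j ≠ 0)).card :=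
  signChanges_tildeSeq_le_general r a ε hε c
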